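/- Let X, Y, Z be i.i.d. real random variables with mean 0, positive variance, and finite fourth moment. Then Corr(|X−Y|², |X−Z|²) < 1/3 if and only if E|X|⁴ < 5(E|X|²)². -/

import Mathlib

open MeasureTheory ProbabilityTheory

/-- Covariance of two real random variables. -/
noncomputable def cov {Ω : Type*} [MeasurableSpace Ω] (f g : Ω → ℝ) (μ : Measure Ω) : ℝ :=
  ∫ ω, (f ω - ∫ ω', f ω' ∂μ) * (g ω - ∫ ω', g ω' ∂μ) ∂μ

/-- Pearson correlation coefficient of two real random variables. -/
noncomputable def corr {Ω : Type*} [MeasurableSpace Ω] (f g : Ω → ℝ) (μ : Measure Ω) : ℝ :=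
  cov f g μ / (Real.sqrt (variance f μ) * Real.sqrt (variance g μ))

/-!
Write `m₂ = E X²`, `m₄ = E X⁴`, `A = (X - Y)²`, `B = (X - Z)²`. Expanding a power of a difference
binomially and factorising each mixed moment by independence, all odd moments of `X` that appear
are multiplied by `E X = 0`, and one finds `E A = 2 m₂`, `E A² = 2 m₄ + 6 m₂²`, hence
`Var A = Var B = 2 m₄ + 2 m₂²`. For `E[AB]` expand `(X - Z)²` against the pair `(A, X)`, which is
independent of `Z`: `E[AB] = m₂ E A + E[X² A] = m₄ + 3 m₂²`, so `Cov(A, B) = m₄ - m₂²`. Thus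
`Corr(A, B) = (m₄ - m₂²) / (2 (m₄ + m₂²))`, which is `< 1/3` iff `m₄ < 5 m₂²`.
-/

open Finset

section

variable {Ω : Type*} [MeasurableSpace Ω] {μ : Measure Ω}

lemma MeasureTheory.MemLp.integrable_pow [IsFiniteMeasure μ] {X : Ω → ℝ} {p : ENNReal}
    (hX : MemLp X p μ) {n : ℕ} (hn : (n : ENNReal) ≤ p) : Integrable (fun ω => X ω ^ n) μ := by
  have := (hX.mono_exponent hn).integrable_norm_pow'
  exact (integrable_norm_iff (hX.aestronglyMeasurable.pow n)).1 (by simpa [norm_pow] using this)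

lemma MeasureTheory.MemLp.sq {f : Ω → ℝ} (hf : MemLp f 4 μ) : MemLp (fun ω => f ω ^ 2) 2 μ := by
  refine (memLp_two_iff_integrable_sq (f := fun ω => f ω ^ 2) (hf.aestronglyMeasurable.pow 2)).2 ?_
  refine (hf.integrable_norm_pow (p := 4) (by norm_num)).congr (ae_of_all _ fun ω => ?_)
  simp [← pow_mul, Real.norm_eq_abs, Even.pow_abs ⟨2, rfl⟩]

lemma mul_sub_pow_eq_sum (f u w : ℝ) (n : ℕ) :
    f * (u - w) ^ n =
      ∑ k ∈ range (n + 1), (-1) ^ (k + n) * n.choose k * (f * u ^ k * w ^ (n - k)) := by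
  rw [sub_pow, mul_sum]
  exact sum_congr rfl fun k _ => by ring

namespace ProbabilityTheory

section Binomial

variable {F U W : Ω → ℝ} {n : ℕ}

lemma IndepFun.mul_pow_pow (h : IndepFun (fun ω => (F ω, U ω)) W μ) (k j : ℕ) :
    IndepFun (fun ω => F ω * U ω ^ k) (fun ω => W ω ^ j) μ :=
  h.comp (φ := fun p : ℝ × ℝ => p.1 * p.2 ^ k) (ψ := fun w => w ^ j) (by fun_prop) (by fun_prop)

lemma IndepFun.integrable_mul_sub_pow (h : IndepFun (fun ω => (F ω, U ω)) W μ)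
    (hFU : ∀ k ≤ n, Integrable (fun ω => F ω * U ω ^ k) μ)
    (hW : ∀ k ≤ n, Integrable (fun ω => W ω ^ k) μ) :
    Integrable (fun ω => F ω * (U ω - W ω) ^ n) μ := by
  simp_rw [mul_sub_pow_eq_sum]
  refine integrable_finsetSum _ fun k hk => Integrable.const_mul ?_ _
  have hk : k ≤ n := mem_range_succ_iff.1 hk
  exact (h.mul_pow_pow k (n - k)).integrable_mul (hFU k hk) (hW (n - k) (Nat.sub_le n k))

lemma IndepFun.integral_mul_sub_pow (h : IndepFun (fun ω => (F ω, U ω)) W μ)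
    (hFU : ∀ k ≤ n, Integrable (fun ω => F ω * U ω ^ k) μ)
    (hW : ∀ k ≤ n, Integrable (fun ω => W ω ^ k) μ) :
    ∫ ω, F ω * (U ω - W ω) ^ n ∂μ = ∑ k ∈ range (n + 1),
      (-1) ^ (k + n) * n.choose k * ((∫ ω, F ω * U ω ^ k ∂μ) * ∫ ω, W ω ^ (n - k) ∂μ) := by
  have hterm : ∀ k ∈ range (n + 1),
      Integrable (fun ω => F ω * U ω ^ k * W ω ^ (n - k)) μ ∧
      ∫ ω, F ω * U ω ^ k * W ω ^ (n - k) ∂μ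
        = (∫ ω, F ω * U ω ^ k ∂μ) * ∫ ω, W ω ^ (n - k) ∂μ := fun k hk => by
    have hk : k ≤ n := mem_range_succ_iff.1 hk
    have hind := h.mul_pow_pow k (n - k)
    exact ⟨hind.integrable_mul (hFU k hk) (hW _ (Nat.sub_le n k)),
      hind.integral_fun_mul_eq_mul_integral (hFU k hk).1 (hW _ (Nat.sub_le n k)).1⟩
  simp_rw [mul_sub_pow_eq_sum]
  rw [integral_finsetSum _ fun k hk => (hterm k hk).1.const_mul _]
  exact sum_congr rfl fun k hk => by rw [integral_const_mul, (hterm k hk).2]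

end Binomial

section IdentDistrib

variable {X W : Ω → ℝ} {p : ENNReal}

lemma IdentDistrib.integral_pow_eq (h : IdentDistrib X W μ μ) (k : ℕ) :
    ∫ ω, X ω ^ k ∂μ = ∫ ω, W ω ^ k ∂μ :=
  (h.comp (measurable_id.pow_const k)).integral_eq

lemma IndepFun.pow_prodMk (h : IndepFun X W μ) (k : ℕ) :
    IndepFun (fun ω => (X ω ^ k, X ω)) W μ :=
  h.comp (φ := fun x => (x ^ k, x)) (by fun_prop) measurable_id

variable [IsProbabilityMeasure μ]

lemma IndepFun.integrable_pow_mul_sub_pow (h : IndepFun X W μ) (hid : IdentDistrib X W μ μ)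
    (hX : MemLp X p μ) {k n : ℕ} (hkn : ((k + n : ℕ) : ENNReal) ≤ p) :
    Integrable (fun ω => X ω ^ k * (X ω - W ω) ^ n) μ := by
  refine (h.pow_prodMk k).integrable_mul_sub_pow (fun j hj => ?_) (fun j hj => ?_)
  · simp_rw [← pow_add]
    exact hX.integrable_pow (le_trans (by gcongr) hkn)
  · exact (hid.memLp_snd hX).integrable_pow (le_trans (by gcongr; omega) hkn)

lemma IndepFun.integral_pow_mul_sub_pow (h : IndepFun X W μ) (hid : IdentDistrib X W μ μ)
    (hX : MemLp X p μ) {k n : ℕ} (hkn : ((k + n : ℕ) : ENNReal) ≤ p) :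
    ∫ ω, X ω ^ k * (X ω - W ω) ^ n ∂μ = ∑ j ∈ range (n + 1),
      (-1) ^ (j + n) * n.choose j * ((∫ ω, X ω ^ (k + j) ∂μ) * ∫ ω, X ω ^ (n - j) ∂μ) := by
  rw [(h.pow_prodMk k).integral_mul_sub_pow (fun j hj => ?_) (fun j hj => ?_)]
  · simp_rw [← pow_add, hid.integral_pow_eq]
  · simp_rw [← pow_add]
    exact hX.integrable_pow (le_trans (by gcongr) hkn)
  · exact (hid.memLp_snd hX).integrable_pow (le_trans (by gcongr; omega) hkn)

lemma IndepFun.integral_pow_mul_sub_sq (h : IndepFun X W μ) (hid : IdentDistrib X W μ μ)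
    (h0 : ∫ ω, X ω ∂μ = 0) (hX : MemLp X p μ) {k : ℕ} (hk : ((k + 2 : ℕ) : ENNReal) ≤ p) :
    ∫ ω, X ω ^ k * (X ω - W ω) ^ 2 ∂μ
      = ∫ ω, X ω ^ (k + 2) ∂μ + (∫ ω, X ω ^ k ∂μ) * ∫ ω, X ω ^ 2 ∂μ := by
  rw [h.integral_pow_mul_sub_pow hid hX hk]
  simp only [sum_range_succ, sum_range_zero, Nat.reduceSub, Nat.choose, add_zero, pow_zero, pow_one,
    h0, integral_const, probReal_univ, smul_eq_mul]
  ring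

lemma IndepFun.integral_sub_sq (h : IndepFun X W μ) (hid : IdentDistrib X W μ μ)
    (h0 : ∫ ω, X ω ∂μ = 0) (hX : MemLp X 2 μ) :
    ∫ ω, (X ω - W ω) ^ 2 ∂μ = 2 * ∫ ω, X ω ^ 2 ∂μ := by
  have := h.integral_pow_mul_sub_sq hid h0 hX (k := 0) (by norm_num)
  simp only [pow_zero, one_mul, zero_add, integral_const, probReal_univ, smul_eq_mul] at this
  linarith

lemma IndepFun.integral_sub_pow_four (h : IndepFun X W μ) (hid : IdentDistrib X W μ μ)
    (h0 : ∫ ω, X ω ∂μ = 0) (hX : MemLp X 4 μ) :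
    ∫ ω, (X ω - W ω) ^ 4 ∂μ = 2 * ∫ ω, X ω ^ 4 ∂μ + 6 * (∫ ω, X ω ^ 2 ∂μ) ^ 2 := by
  have := h.integral_pow_mul_sub_pow hid hX (k := 0) (n := 4) (by norm_num)
  simp only [pow_zero, one_mul] at this
  rw [this]
  simp only [sum_range_succ, sum_range_zero, Nat.reduceSub, Nat.choose, zero_add, pow_zero, pow_one,
    h0, integral_const, probReal_univ, smul_eq_mul]
  ring

lemma IndepFun.variance_sub_sq (h : IndepFun X W μ) (hid : IdentDistrib X W μ μ)
    (h0 : ∫ ω, X ω ∂μ = 0) (hX : MemLp X 4 μ) :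
    Var[fun ω => (X ω - W ω) ^ 2; μ] = 2 * ∫ ω, X ω ^ 4 ∂μ + 2 * (∫ ω, X ω ^ 2 ∂μ) ^ 2 := by
  have hD : MemLp (fun ω => X ω - W ω) 4 μ := hX.sub (hid.memLp_snd hX)
  rw [variance_eq_sub hD.sq]
  simp only [Pi.pow_apply, ← pow_mul]
  rw [h.integral_sub_pow_four hid h0 hX, h.integral_sub_sq hid h0 (hX.mono_exponent (by norm_num))]
  ring

end IdentDistrib

lemma covariance_sub_sq_sub_sq [IsProbabilityMeasure μ] {X Y Z : Ω → ℝ}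
    (hXY : IndepFun X Y μ) (hXYZ : IndepFun (fun ω => (X ω, Y ω)) Z μ)
    (hidY : IdentDistrib X Y μ μ) (hidZ : IdentDistrib X Z μ μ)
    (h0 : ∫ ω, X ω ∂μ = 0) (hX : MemLp X 4 μ) :
    cov[fun ω => (X ω - Y ω) ^ 2, fun ω => (X ω - Z ω) ^ 2; μ]
      = ∫ ω, X ω ^ 4 ∂μ - (∫ ω, X ω ^ 2 ∂μ) ^ 2 := by
  have hX2 : MemLp X 2 μ := hX.mono_exponent (by norm_num)
  have hXZ : IndepFun X Z μ := hXYZ.comp (φ := Prod.fst) measurable_fst measurable_id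
  have hind : IndepFun (fun ω => ((X ω - Y ω) ^ 2, X ω)) Z μ :=
    hXYZ.comp (φ := fun p => ((p.1 - p.2) ^ 2, p.1)) (by fun_prop) measurable_id
  have hcomm : ∀ k : ℕ, ∫ ω, (X ω - Y ω) ^ 2 * X ω ^ k ∂μ
      = ∫ ω, X ω ^ k * (X ω - Y ω) ^ 2 ∂μ := fun k => by simp_rw [mul_comm]
  have hcross : ∫ ω, (X ω - Y ω) ^ 2 * (X ω - Z ω) ^ 2 ∂μ
      = ∫ ω, X ω ^ 4 ∂μ + 3 * (∫ ω, X ω ^ 2 ∂μ) ^ 2 := by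
    rw [hind.integral_mul_sub_pow (fun k hk => ?_) (fun k hk => ?_)]
    · simp only [sum_range_succ, hcomm, ← hidZ.integral_pow_eq]
      rw [hXY.integral_pow_mul_sub_sq hidY h0 hX (k := 2) (by norm_num)]
      simp only [sum_range_zero, Nat.reduceSub, Nat.choose, pow_zero, one_mul, pow_one, h0,
        hXY.integral_sub_sq hidY h0 hX2, integral_const, probReal_univ, smul_eq_mul]
      ring
    · simp only [mul_comm _ (X _ ^ k)]
      exact hXY.integrable_pow_mul_sub_pow hidY hX (by norm_cast; omega)
    · exact (hidZ.memLp_snd hX).integrable_pow (by norm_cast; omega)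
  have hDY : MemLp (fun ω => X ω - Y ω) 4 μ := hX.sub (hidY.memLp_snd hX)
  have hDZ : MemLp (fun ω => X ω - Z ω) 4 μ := hX.sub (hidZ.memLp_snd hX)
  rw [covariance_eq_sub hDY.sq hDZ.sq]
  simp only [Pi.mul_apply]
  rw [hcross, hXY.integral_sub_sq hidY h0 hX2, hXZ.integral_sub_sq hidZ h0 hX2]
  ring

end ProbabilityTheory

end

theorem stmt3_general {Ω : Type*} [MeasurableSpace Ω] (μ : Measure Ω) [IsProbabilityMeasure μ]
    (X Y Z : Ω → ℝ)
    (hindep : iIndepFun ![X, Y, Z] μ)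
    (hXY : IdentDistrib X Y μ μ) (hXZ : IdentDistrib X Z μ μ)
    (hmean : ∫ ω, X ω ∂μ = 0) (hvar : 0 < variance X μ) (hmom : MemLp X 4 μ) :
    corr (fun ω => |X ω - Y ω| ^ 2) (fun ω => |X ω - Z ω| ^ 2) μ < 1 / 3
      ↔ ∫ ω, |X ω| ^ 4 ∂μ < 5 * (∫ ω, |X ω| ^ 2 ∂μ) ^ 2 := by
  have hmeas : ∀ i, AEMeasurable (![X, Y, Z] i) μ := by
    intro i; fin_cases i
    exacts [hmom.aemeasurable, hXY.aemeasurable_snd, hXZ.aemeasurable_snd]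
  have hIXY : IndepFun X Y μ := hindep.indepFun (i := 0) (j := 1) (by decide)
  have hIXZ : IndepFun X Z μ := hindep.indepFun (i := 0) (j := 2) (by decide)
  have hIXYZ : IndepFun (fun ω => (X ω, Y ω)) Z μ :=
    hindep.indepFun_prodMk₀ hmeas 0 1 2 (by decide) (by decide)
  have hm2 : 0 < ∫ ω, X ω ^ 2 ∂μ := variance_of_integral_eq_zero hmom.aemeasurable hmean ▸ hvar
  have hV : 0 < 2 * ∫ ω, X ω ^ 4 ∂μ + 2 * (∫ ω, X ω ^ 2 ∂μ) ^ 2 := by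
    have : 0 ≤ ∫ ω, X ω ^ 4 ∂μ := integral_nonneg fun ω => by positivity
    positivity
  simp only [sq_abs, Even.pow_abs ⟨2, rfl⟩]
  rw [corr, cov, ← covariance, covariance_sub_sq_sub_sq hIXY hIXYZ hXY hXZ hmean hmom,
    hIXY.variance_sub_sq hXY hmean hmom, hIXZ.variance_sub_sq hXZ hmean hmom,
    Real.mul_self_sqrt hV.le, div_lt_iff₀ hV]
  constructor <;> intro h <;> linarith

theorem stmt3 {Ω : Type*} [MeasurableSpace Ω] (μ : Measure Ω) [IsProbabilityMeasure μ]
    (X Y Z : Ω → ℝ) (hX : Measurable X) (hY : Measurable Y) (hZ : Measurable Z)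
    (hindep : iIndepFun ![X, Y, Z] μ)
    (hXY : IdentDistrib X Y μ μ) (hXZ : IdentDistrib X Z μ μ)
    (hmean : ∫ ω, X ω ∂μ = 0) (hvar : 0 < variance X μ) (hmom : MemLp X 4 μ) :
    corr (fun ω => |X ω - Y ω| ^ 2) (fun ω => |X ω - Z ω| ^ 2) μ < 1 / 3
      ↔ ∫ ω, |X ω| ^ 4 ∂μ < 5 * (∫ ω, |X ω| ^ 2 ∂μ) ^ 2 :=
  stmt3_general μ X Y Z hindep hXY hXZ hmean hvar hmom
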